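/- Let α_1, β_1, α_2, β_2 be positive integers. Then the probability that an independent Beta(α_1,β_1) sample exceeds an independent Beta(α_2,β_2) sample satisfies ∫_0^1 f(x; α_1, β_1) I_x(α_2, β_2) dx = Σ_{i=0}^{α_1−1} B(α_2+i, β_1+β_2) / ( (β_1+i) · B(1+i, β_1) · B(α_2, β_2) ). -/

import Mathlib

open MeasureTheory Real Set

/-- The Beta function `B(a,b) = ∫₀¹ t^(a-1) (1-t)^(b-1) dt`. -/
noncomputable def betaFn (a b : ℝ) : ℝ :=
  ∫ t in (0:ℝ)..1, t ^ (a - 1) * (1 - t) ^ (b - 1)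

/-- The Beta(a,b) probability density on `[0,1]`. -/
noncomputable def betaPdf (a b : ℝ) (x : ℝ) : ℝ :=
  x ^ (a - 1) * (1 - x) ^ (b - 1) / betaFn a b

/-- The cumulative distribution function of Beta(a,b). -/
noncomputable def betaCdf (a b : ℝ) (x : ℝ) : ℝ :=
  (∫ t in (0:ℝ)..x, t ^ (a - 1) * (1 - t) ^ (b - 1)) / betaFn a b

/-- `g(α₁,β₁,α₂,β₂)`: the probability that an independent Beta(α₁,β₁) sample exceeds an
independent Beta(α₂,β₂) sample. -/
noncomputable def probG (a₁ b₁ a₂ b₂ : ℝ) : ℝ :=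
  ∫ x in (0:ℝ)..1, betaPdf a₁ b₁ x * betaCdf a₂ b₂ x

/-- `h(α₁,β₁,α₂,β₂) = B(α₁+α₂,β₁+β₂)/(B(α₁,β₁) B(α₂,β₂))`. -/
noncomputable def probH (a₁ b₁ a₂ b₂ : ℝ) : ℝ :=
  betaFn (a₁ + a₂) (b₁ + b₂) / (betaFn a₁ b₁ * betaFn a₂ b₂)

/-!
If `X ~ Beta(α₁, β₁)` and `Y ~ Beta(α₂, β₂)` are independent, an integration by parts turns
`∫ f_X F_Y` into `∫ (1 - F_X) f_Y`, i.e. `P(X > Y) = E[1 - F_X(Y)]`. For integer parameters,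
repeated integration by parts in `∫ₓ¹ tᵐ (1 - t)ⁿ dt` shows that the survival function of
`Beta(m + 1, n + 1)` is the finite sum
`1 - F_X(x) = ∑_{i ≤ m} xⁱ (1 - x)ⁿ⁺¹ / ((n + 1 + i) B(1 + i, n + 1))`,
and integrating each term against `f_Y` produces `B(α₂ + i, β₁ + β₂) / B(α₂, β₂)`.
-/

open intervalIntegral

theorem integral_mul_primitive_eq_integral_tail_mul {f g : ℝ → ℝ} (hf : Continuous f)
    (hg : Continuous g) (a b : ℝ) :
    ∫ x in a..b, f x * ∫ t in a..x, g t = ∫ x in a..b, (∫ t in x..b, f t) * g x := by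
  have hF : ∀ x ∈ uIcc a b, HasDerivAt (fun x => ∫ t in x..b, f t) (-f x) x := fun x _ => by
    simp only [integral_symm b]
    exact (hf.integral_hasStrictDerivAt b x).hasDerivAt.neg
  have hG : ∀ x ∈ uIcc a b, HasDerivAt (fun x => ∫ t in a..x, g t) (g x) x :=
    fun x _ => (hg.integral_hasStrictDerivAt a x).hasDerivAt
  have h := integral_deriv_mul_eq_sub hF hG (hf.neg.intervalIntegrable a b)
    (hg.intervalIntegrable a b)
  simp only [integral_same, mul_zero, zero_mul, sub_zero, neg_mul, neg_add_eq_sub] at h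
  rwa [intervalIntegral.integral_sub, sub_eq_zero, eq_comm] at h
  · exact ContinuousOn.intervalIntegrable fun x hx =>
      ((hF x hx).continuousAt.mul hg.continuousAt).continuousWithinAt
  · exact ContinuousOn.intervalIntegrable fun x hx =>
      (hf.continuousAt.mul (hG x hx).continuousAt).continuousWithinAt

theorem integral_one_sub_pow (n : ℕ) (x : ℝ) :
    ∫ t in x..1, (1 - t) ^ n = (1 - x) ^ (n + 1) / (n + 1) := by
  simp [intervalIntegral.integral_comp_sub_left fun t => t ^ n, integral_pow]

theorem add_two_mul_integral_pow_succ_mul_one_sub_pow (m n : ℕ) (x : ℝ) :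
    ((m : ℝ) + n + 2) * ∫ t in x..1, t ^ (m + 1) * (1 - t) ^ n =
      x ^ (m + 1) * (1 - x) ^ (n + 1) + (m + 1) * ∫ t in x..1, t ^ m * (1 - t) ^ n := by
  have hderiv : ∀ t, HasDerivAt (fun t : ℝ => t ^ (m + 1) * (1 - t) ^ (n + 1))
      ((m + 1) * (t ^ m * (1 - t) ^ n) - (m + n + 2) * (t ^ (m + 1) * (1 - t) ^ n)) t := by
    intro t
    refine ((hasDerivAt_pow (m + 1) t).mul
      (((hasDerivAt_id' t).const_sub 1).pow (n + 1))).congr_deriv ?_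
    simp only [Nat.add_sub_cancel, Pi.pow_apply]
    push_cast
    ring
  have hftc := integral_eq_sub_of_hasDerivAt (fun t _ => hderiv t)
    (Continuous.intervalIntegrable (by fun_prop) x 1)
  rw [intervalIntegral.integral_sub, intervalIntegral.integral_const_mul,
    intervalIntegral.integral_const_mul] at hftc
  · simp only [one_pow, sub_self, zero_pow (Nat.succ_ne_zero n), mul_zero, zero_sub] at hftc
    linear_combination -hftc
  all_goals exact Continuous.intervalIntegrable (by fun_prop) x 1

theorem betaFn_natCast_add_one (m n : ℕ) :
    betaFn (m + 1) (n + 1) = ∫ x in (0:ℝ)..1, x ^ m * (1 - x) ^ n := by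
  simp only [betaFn, add_sub_cancel_right, rpow_natCast]

theorem betaPdf_natCast_add_one (m n : ℕ) (x : ℝ) :
    betaPdf (m + 1) (n + 1) x = x ^ m * (1 - x) ^ n / betaFn (m + 1) (n + 1) := by
  simp only [betaPdf, add_sub_cancel_right, rpow_natCast]

theorem betaCdf_natCast_add_one (m n : ℕ) (x : ℝ) :
    betaCdf (m + 1) (n + 1) x = (∫ t in (0:ℝ)..x, t ^ m * (1 - t) ^ n) / betaFn (m + 1) (n + 1) := by
  simp only [betaCdf, add_sub_cancel_right, rpow_natCast]

theorem betaFn_natCast_add_one_pos (m n : ℕ) : 0 < betaFn (m + 1) (n + 1) := by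
  rw [betaFn_natCast_add_one]
  refine intervalIntegral_pos_of_pos_on (Continuous.intervalIntegrable (by fun_prop) 0 1)
    (fun x hx => ?_) zero_lt_one
  exact mul_pos (pow_pos hx.1 _) (pow_pos (sub_pos.2 hx.2) _)

theorem one_sub_betaCdf_natCast_add_one (m n : ℕ) (x : ℝ) :
    1 - betaCdf (m + 1) (n + 1) x = (∫ t in x..1, t ^ m * (1 - t) ^ n) / betaFn (m + 1) (n + 1) := by
  have hB := (betaFn_natCast_add_one_pos m n).ne'
  rw [betaCdf_natCast_add_one, one_sub_div hB, betaFn_natCast_add_one,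
    integral_interval_sub_left] <;> exact Continuous.intervalIntegrable (by fun_prop) _ _

theorem one_sub_betaCdf_eq_sum (m n : ℕ) (x : ℝ) :
    1 - betaCdf (m + 1) (n + 1) x = ∑ i ∈ Finset.range (m + 1),
      x ^ i * (1 - x) ^ (n + 1) / ((n + 1 + i) * betaFn (1 + i) (n + 1)) := by
  rw [one_sub_betaCdf_natCast_add_one]
  induction m with
  | zero =>
    have hB : betaFn 1 (n + 1) = 1 / (n + 1) := by
      simpa [integral_one_sub_pow] using betaFn_natCast_add_one 0 n
    simp only [Finset.sum_range_one, pow_zero, one_mul, Nat.cast_zero, add_zero, zero_add,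
      integral_one_sub_pow, hB]
    field_simp
  | succ m ih =>
    rw [Finset.sum_range_succ, ← ih, add_comm 1 ((m + 1 : ℕ) : ℝ)]
    have hB := (betaFn_natCast_add_one_pos m n).ne'
    have hB' := (betaFn_natCast_add_one_pos (m + 1) n).ne'
    have hrec := add_two_mul_integral_pow_succ_mul_one_sub_pow m n x
    -- at `x = 0` the recurrence reads `(m + n + 2) B(m + 2, n + 1) = (m + 1) B(m + 1, n + 1)`
    have hrec0 := add_two_mul_integral_pow_succ_mul_one_sub_pow m n 0
    rw [← betaFn_natCast_add_one, ← betaFn_natCast_add_one] at hrec0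
    simp only [zero_pow (Nat.succ_ne_zero m), zero_mul, zero_add] at hrec0
    push_cast at hB' hrec0 ⊢
    field_simp
    linear_combination betaFn (m + 1) (n + 1) * hrec -
      (∫ t in x..1, t ^ m * (1 - t) ^ n) * hrec0

theorem probG_eq_integral_one_sub_betaCdf_mul_betaPdf (m n p q : ℕ) :
    probG (m + 1) (n + 1) (p + 1) (q + 1) =
      ∫ y in (0:ℝ)..1, (1 - betaCdf (m + 1) (n + 1) y) * betaPdf (p + 1) (q + 1) y := by
  have hswap := integral_mul_primitive_eq_integral_tail_mul
    (f := fun x => x ^ m * (1 - x) ^ n) (g := fun t => t ^ p * (1 - t) ^ q)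
    (by fun_prop) (by fun_prop) 0 1
  simp_rw [probG, one_sub_betaCdf_natCast_add_one, betaPdf_natCast_add_one,
    betaCdf_natCast_add_one]
  calc _ = (∫ x in (0:ℝ)..1, x ^ m * (1 - x) ^ n * ∫ t in (0:ℝ)..x, t ^ p * (1 - t) ^ q) /
        (betaFn (m + 1) (n + 1) * betaFn (p + 1) (q + 1)) := by
        rw [← intervalIntegral.integral_div]; congr 1; ext; ring
    _ = _ := by
        rw [hswap, ← intervalIntegral.integral_div]; congr 1; ext; ring

theorem integral_pow_mul_one_sub_pow_mul_betaPdf (i k p q : ℕ) :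
    ∫ y in (0:ℝ)..1, y ^ i * (1 - y) ^ k * betaPdf (p + 1) (q + 1) y =
      betaFn (p + 1 + i) (k + (q + 1)) / betaFn (p + 1) (q + 1) := by
  have hB : betaFn (p + 1 + i) (k + (q + 1)) = ∫ y in (0:ℝ)..1, y ^ (p + i) * (1 - y) ^ (q + k) := by
    rw [← betaFn_natCast_add_one]; push_cast; ring_nf
  simp only [hB, betaPdf_natCast_add_one, ← intervalIntegral.integral_div]
  congr 1; ext; ring

/-- Closed-form series for the probability that a Beta(α₁,β₁) sample exceeds a
Beta(α₂,β₂) sample, for positive integer parameters (sum over `i < α₁`). -/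
theorem probG_sum_formula_alpha (a₁ b₁ a₂ b₂ : ℕ)
    (hα₁ : 0 < a₁) (hβ₁ : 0 < b₁) (hα₂ : 0 < a₂) (hβ₂ : 0 < b₂) :
    probG (a₁ : ℝ) (b₁ : ℝ) (a₂ : ℝ) (b₂ : ℝ) =
      ∑ i ∈ Finset.range a₁,
        betaFn ((a₂ : ℝ) + i) ((b₁ : ℝ) + b₂) /
          (((b₁ : ℝ) + i) * betaFn (1 + (i : ℝ)) (b₁ : ℝ) * betaFn (a₂ : ℝ) (b₂ : ℝ)) := by
  obtain ⟨m, rfl⟩ := Nat.exists_eq_add_one.2 hα₁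
  obtain ⟨n, rfl⟩ := Nat.exists_eq_add_one.2 hβ₁
  obtain ⟨p, rfl⟩ := Nat.exists_eq_add_one.2 hα₂
  obtain ⟨q, rfl⟩ := Nat.exists_eq_add_one.2 hβ₂
  push_cast
  simp_rw [probG_eq_integral_one_sub_betaCdf_mul_betaPdf, one_sub_betaCdf_eq_sum, Finset.sum_mul]
  rw [intervalIntegral.integral_finsetSum]
  · refine Finset.sum_congr rfl fun i _ => ?_
    simp_rw [div_mul_eq_mul_div]
    rw [intervalIntegral.integral_div, integral_pow_mul_one_sub_pow_mul_betaPdf, div_div,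
      mul_comm (betaFn _ _), Nat.cast_add_one]
  · intro i _
    simp only [betaPdf_natCast_add_one]
    exact Continuous.intervalIntegrable (by fun_prop) _ _
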